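/- arXiv:2506.23068 — 4 statements merged into one kernel-verified Lean document; each statement's English description precedes it below -/
import Mathlib

section
/- Let V be a finite type and let E and E' be relations on V with no 2-cycles (for all a b, E a b → ¬ E b a, and likewise for E') that have the same skeleton (for all a b, (E a b ∨ E b a) ↔ (E' a b ∨ E' b a)). Let 𝓘 be a family of subsets of V such that the intervention graphs agree, E^(I) = E'^(I), for every I ∈ 𝓘. If for every pair a, b with E a b there exists I ∈ 𝓘 containing exactly one of a and b, then E = E'; that is, such an intervention target family uniquely identifies the causal graph among graphs with the same skeleton that are interventionally indistinguishable. -/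
/-- The intervention graph of `E` under intervention target `I`: all edges pointing into
a vertex of `I` are removed. -/
def interventionGraph {V : Type*} (E : V → V → Prop) (I : Set V) : V → V → Prop :=
  fun a b => E a b ∧ b ∉ I

/-- Identifiability of a causal graph from interventions: if every edge is covered by an
intervention target containing exactly one of its endpoints, then two graphs with the same
skeleton and no 2-cycles that agree on all intervention graphs must be equal. -/
theorem causal_graph_identifiability
    {V : Type*} [Fintype V] (E E' : V → V → Prop)
    (hE : ∀ a b, E a b → ¬ E b a) (hE' : ∀ a b, E' a b → ¬ E' b a)
    (hskel : ∀ a b, (E a b ∨ E b a) ↔ (E' a b ∨ E' b a))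
    (𝓘 : Set (Set V))
    (hagree : ∀ I ∈ 𝓘, interventionGraph E I = interventionGraph E' I)
    (hcover : ∀ a b, E a b → ∃ I ∈ 𝓘, (a ∈ I ∧ b ∉ I) ∨ (b ∈ I ∧ a ∉ I)) :
    E = E' := by
  have key : ∀ a b, E a b → E' a b := by
    intro a b hab
    obtain ⟨I, hI, hcase⟩ := hcover a b hab
    have hag := hagree I hI
    rcases hcase with ⟨haI, hbI⟩ | ⟨hbI, haI⟩
    · have : interventionGraph E I a b := ⟨hab, hbI⟩
      rw [hag] at this
      exact this.1
    · rcases (hskel a b).1 (Or.inl hab) with h | h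
      · exact h
      · exfalso
        have : interventionGraph E' I b a := ⟨h, haI⟩
        rw [← hag] at this
        exact hE a b hab this.1
  funext a b
  apply propext
  constructor
  · exact key a b
  · intro h'
    rcases (hskel a b).2 (Or.inl h') with h | h
    · exact h
    · exact absurd (key b a h) (hE' a b h')
end

section
/- Let U and K be finite types, let w : U × K → ℝ≥0 be a probability mass function (Σ_{(u,k)} w (u,k) = 1), and set p̄ k := Σ_u w (u,k). Let n : ℕ and consider n+1 i.i.d. samples (U₀,K₀), (U₁,K₁), …, (Uₙ,Kₙ), i.e., the product measure of n+1 copies of the distribution w on (U × K)^{n+1}. Then the probability of the event {for every i with 1 ≤ i ≤ n, K_i = K₀ implies U_i = U₀} equals Σ_{k} Σ_{u} w (u,k) · (1 − p̄ k + w (u,k))^n. Consequently, the misclassification probability, defined as the complement of this event, equals 1 − Σ_{k} Σ_{u} w (u,k) · (1 − p̄ k + w (u,k))^n. -/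
open scoped NNReal

/-- With `n + 1` i.i.d. samples drawn from the joint pmf `w` on `U × K`, the probability
that every later sample assigned to the same codebook entry as the reference sample shares
its true meta state equals `∑ k, ∑ u, w (u,k) * (1 - p̄ k + w (u,k)) ^ n`, and the
misclassification probability is its complement. -/
theorem misclassification_probability
    {U K : Type*} [Fintype U] [Fintype K] [DecidableEq U] [DecidableEq K]
    (w : U × K → ℝ≥0) (hw : ∑ uk, w uk = 1) (n : ℕ) :
    (∑ f : Fin (n + 1) → U × K,
        (if ∀ i : Fin (n + 1), 1 ≤ (i : ℕ) → ((f i).2 = (f 0).2 → (f i).1 = (f 0).1)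
          then ∏ i, w (f i) else 0))
      = ∑ k, ∑ u, w (u, k) * (1 - (∑ u', w (u', k)) + w (u, k)) ^ n
    ∧ (∑ f : Fin (n + 1) → U × K,
        (if ¬ ∀ i : Fin (n + 1), 1 ≤ (i : ℕ) → ((f i).2 = (f 0).2 → (f i).1 = (f 0).1)
          then ∏ i, w (f i) else 0))
      = 1 - ∑ k, ∑ u, w (u, k) * (1 - (∑ u', w (u', k)) + w (u, k)) ^ n := by
  classical
  set pbar : K → ℝ≥0 := fun k => ∑ u', w (u', k) with hpbar
  have hsumpbar : ∑ k, pbar k = 1 := by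
    rw [← hw, Fintype.sum_prod_type_right]
  have hpbar_le : ∀ k, pbar k ≤ 1 := fun k => by
    rw [← hsumpbar]
    exact Finset.single_le_sum (fun _ _ => zero_le) (Finset.mem_univ k)
  -- key single-sample sum
  have hS : ∀ a : U × K,
      (∑ x : U × K, if x.2 = a.2 → x.1 = a.1 then w x else 0)
        = 1 - pbar a.2 + w a := by
    intro a
    have hsplit : (∑ x : U × K, if x.2 = a.2 → x.1 = a.1 then w x else 0)
        + (∑ x : U × K, if x.2 = a.2 ∧ ¬ x.1 = a.1 then w x else 0) = 1 := by
      rw [← hw, ← Finset.sum_add_distrib]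
      refine Finset.sum_congr rfl fun x _ => ?_
      by_cases h : x.2 = a.2 → x.1 = a.1
      · have h' : ¬ (x.2 = a.2 ∧ ¬ x.1 = a.1) := fun ⟨h1, h2⟩ => h2 (h h1)
        simp [h, h']
      · push_neg at h
        have h' : ¬ (x.2 = a.2 → x.1 = a.1) := fun hc => h.2 (hc h.1)
        simp [h', h.1, h.2]
    have hpa : (∑ x : U × K, if x.2 = a.2 then w x else 0) = pbar a.2 := by
      rw [Fintype.sum_prod_type_right,
        Finset.sum_eq_single a.2 (fun k _ hk => by simp [hk]) (by simp)]
      simp [hpbar]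
    have hB : (∑ x : U × K, if x.2 = a.2 ∧ ¬ x.1 = a.1 then w x else 0) + w a
        = pbar a.2 := by
      have hwa : w a = ∑ x : U × K, if x = a then w x else 0 := by simp
      rw [← hpa, hwa, ← Finset.sum_add_distrib]
      refine Finset.sum_congr rfl fun x _ => ?_
      by_cases hx : x = a
      · subst hx; simp
      · by_cases h2 : x.2 = a.2
        · have h1 : ¬ x.1 = a.1 := fun h1 => hx (Prod.ext h1 h2)
          simp [h2, h1, hx]
        · simp [h2, hx]
    have key : (∑ x : U × K, if x.2 = a.2 → x.1 = a.1 then w x else 0) + pbar a.2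
        = 1 + w a := by
      rw [← hB, ← add_assoc, hsplit]
    have := eq_tsub_of_add_eq key
    rw [this, tsub_add_eq_add_tsub (hpbar_le a.2)]
  -- condition on cons
  have hcond : ∀ (a : U × K) (g : Fin n → U × K),
      ((∀ i : Fin (n + 1), 1 ≤ (i : ℕ) →
          (((Fin.cons a g : Fin (n + 1) → U × K) i).2
              = ((Fin.cons a g : Fin (n + 1) → U × K) 0).2 →
            ((Fin.cons a g : Fin (n + 1) → U × K) i).1
              = ((Fin.cons a g : Fin (n + 1) → U × K) 0).1))
        ↔ ∀ j : Fin n, (g j).2 = a.2 → (g j).1 = a.1) := by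
    intro a g
    constructor
    · intro h j
      have := h j.succ (by simp [Fin.val_succ])
      simpa using this
    · intro h i hi
      refine Fin.cases ?_ (fun j => ?_) i hi
      · intro hi'; simp at hi'
      · intro _; simpa using h j
  -- main computation of the good sum
  have hgood : (∑ f : Fin (n + 1) → U × K,
      (if ∀ i : Fin (n + 1), 1 ≤ (i : ℕ) → ((f i).2 = (f 0).2 → (f i).1 = (f 0).1)
        then ∏ i, w (f i) else 0))
      = ∑ k, ∑ u, w (u, k) * (1 - pbar k + w (u, k)) ^ n := by
    have hrhs : (∑ k, ∑ u, w (u, k) * (1 - pbar k + w (u, k)) ^ n)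
        = ∑ a : U × K, w a * (1 - pbar a.2 + w a) ^ n :=
      (Fintype.sum_prod_type_right (f := fun a : U × K =>
        w a * (1 - pbar a.2 + w a) ^ n)).symm
    rw [hrhs, ← Equiv.sum_comp (Fin.consEquiv fun _ => U × K), Fintype.sum_prod_type]
    refine Finset.sum_congr rfl fun a _ => ?_
    have step1 : ∀ g : Fin n → U × K,
        (if ∀ i : Fin (n + 1), 1 ≤ (i : ℕ) →
            ((((Fin.consEquiv fun _ => U × K) (a, g)) i).2
                = (((Fin.consEquiv fun _ => U × K) (a, g)) 0).2 →
              (((Fin.consEquiv fun _ => U × K) (a, g)) i).1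
                = (((Fin.consEquiv fun _ => U × K) (a, g)) 0).1)
          then ∏ i, w (((Fin.consEquiv fun _ => U × K) (a, g)) i) else 0)
        = w a * ∏ j, (if (g j).2 = a.2 → (g j).1 = a.1 then w (g j) else 0) := by
      intro g
      have he : ((Fin.consEquiv fun _ => U × K) (a, g)) = Fin.cons a g := rfl
      rw [he]
      by_cases h : ∀ j : Fin n, (g j).2 = a.2 → (g j).1 = a.1
      · rw [if_pos ((hcond a g).mpr h), Fin.prod_univ_succ]
        simp only [Fin.cons_zero, Fin.cons_succ]
        congr 1
        exact Finset.prod_congr rfl fun j _ => (if_pos (h j)).symm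
      · rw [if_neg (fun hc => h ((hcond a g).mp hc))]
        push_neg at h
        obtain ⟨j, hj1, hj2⟩ := h
        rw [Finset.prod_eq_zero (Finset.mem_univ j)
          (by rw [if_neg (fun hc => hj2 (hc hj1))]), mul_zero]
    simp only [step1]
    rw [← Finset.mul_sum]
    congr 1
    rw [← hS a]
    exact (Fintype.sum_pow
      (fun x : U × K => if x.2 = a.2 → x.1 = a.1 then w x else 0) n).symm
  refine ⟨hgood, ?_⟩
  have htot : (∑ f : Fin (n + 1) → U × K,
        (if ∀ i : Fin (n + 1), 1 ≤ (i : ℕ) → ((f i).2 = (f 0).2 → (f i).1 = (f 0).1)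
          then ∏ i, w (f i) else 0))
      + (∑ f : Fin (n + 1) → U × K,
        (if ¬ ∀ i : Fin (n + 1), 1 ≤ (i : ℕ) → ((f i).2 = (f 0).2 → (f i).1 = (f 0).1)
          then ∏ i, w (f i) else 0)) = 1 := by
    rw [← Finset.sum_add_distrib]
    have hpt : ∀ f : Fin (n + 1) → U × K,
        (if ∀ i : Fin (n + 1), 1 ≤ (i : ℕ) → ((f i).2 = (f 0).2 → (f i).1 = (f 0).1)
          then ∏ i, w (f i) else 0)
        + (if ¬ ∀ i : Fin (n + 1), 1 ≤ (i : ℕ) → ((f i).2 = (f 0).2 → (f i).1 = (f 0).1)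
          then ∏ i, w (f i) else 0) = ∏ i, w (f i) := fun f => by
      by_cases h : ∀ i : Fin (n + 1), 1 ≤ (i : ℕ) → ((f i).2 = (f 0).2 → (f i).1 = (f 0).1)
      · rw [if_pos h, if_neg (not_not_intro h), add_zero]
      · rw [if_neg h, if_pos h, zero_add]
    simp only [hpt]
    rw [← Fintype.sum_pow w (n + 1), hw, one_pow]
  rw [hgood] at htot
  exact eq_tsub_of_add_eq (by rw [add_comm]; exact htot)
end

section
/- Let X be a finite nonempty type (states), U and Û finite types (meta states), C : X → U the ground-truth meta-state mapping, M : U → Matrix (Fin p) (Fin p) Bool an injective assignment of causal skeleton matrices, and μ : X → ℝ strictly positive weights. For a mapping Ĉ : X → Û, let M̂(û) := ⊔_{x : Ĉ x = û} M (C x) and cost(Ĉ) := Σ_{x} μ x · ‖M̂(Ĉ x)‖₁. If Ĉ merges two states from distinct true meta states, i.e., there exist x₁, x₂ ∈ X with C x₁ ≠ C x₂ and Ĉ x₁ = Ĉ x₂, then cost(Ĉ) > Σ_{x} μ x · ‖M (C x)‖₁. -/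
/-- The `ℓ₁` "norm" of a Boolean matrix: the number of entries equal to `true`. -/
def l1 {p : ℕ} (M : Matrix (Fin p) (Fin p) Bool) : ℕ :=
  (Finset.univ.filter fun ij : Fin p × Fin p => M ij.1 ij.2 = true).card

/-- The skeleton induced by a label `uh` of a mapping `Chat`: the entrywise disjunction
of the skeletons `M (C x)` over the fiber `{x | Chat x = uh}`. -/
noncomputable def fiberSup {X U Uhat : Type*} [Fintype X] [DecidableEq Uhat] {p : ℕ}
    (M : U → Matrix (Fin p) (Fin p) Bool) (C : X → U) (Chat : X → Uhat) (uh : Uhat) :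
    Matrix (Fin p) (Fin p) Bool :=
  fun i j => (Finset.univ.filter fun x => Chat x = uh).sup fun x => M (C x) i j

lemma fiberSup_true {X U Uhat : Type*} [Fintype X] [DecidableEq Uhat] {p : ℕ}
    (M : U → Matrix (Fin p) (Fin p) Bool) (C : X → U) (Chat : X → Uhat)
    {uh : Uhat} {x : X} (hx : Chat x = uh) {i j : Fin p} (h : M (C x) i j = true) :
    fiberSup M C Chat uh i j = true := by
  have : M (C x) i j ≤ fiberSup M C Chat uh i j :=
    Finset.le_sup (f := fun x => M (C x) i j) (by simp [hx])
  rw [h] at this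
  exact le_antisymm le_top this

lemma l1_fiber_le {X U Uhat : Type*} [Fintype X] [DecidableEq Uhat] {p : ℕ}
    (M : U → Matrix (Fin p) (Fin p) Bool) (C : X → U) (Chat : X → Uhat) (x : X) :
    l1 (M (C x)) ≤ l1 (fiberSup M C Chat (Chat x)) := by
  apply Finset.card_le_card
  intro ij hij
  simp only [Finset.mem_filter, Finset.mem_univ, true_and] at *
  exact fiberSup_true M C Chat rfl hij

/-- Merging states from distinct true meta states strictly increases the expected
structural complexity. -/
theorem merging_distinct_meta_states_increases_cost
    {X U Uhat : Type*} [Fintype X] [Nonempty X] [Fintype U] [Fintype Uhat]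
    [DecidableEq U] [DecidableEq Uhat] {p : ℕ}
    (C : X → U)
    (M : U → Matrix (Fin p) (Fin p) Bool) (hM : Function.Injective M)
    (μ : X → ℝ) (hμ : ∀ x, 0 < μ x)
    (Chat : X → Uhat)
    (x₁ x₂ : X) (hne : C x₁ ≠ C x₂) (hmerge : Chat x₁ = Chat x₂) :
    ∑ x, μ x * (l1 (M (C x)) : ℝ)
      < ∑ x, μ x * (l1 (fiberSup M C Chat (Chat x)) : ℝ) := by
  -- the two matrices differ at some entry
  have hMne : M (C x₁) ≠ M (C x₂) := fun h => hne (hM h)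
  have : ∃ i j, M (C x₁) i j ≠ M (C x₂) i j := by
    by_contra h
    push_neg at h
    exact hMne (by ext i j; exact h i j)
  obtain ⟨i, j, hij⟩ := this
  -- pick the state whose matrix is false at (i,j); the other is true
  obtain ⟨y, z, hyz, hfalse, htrue⟩ :
      ∃ y z : X, Chat y = Chat z ∧ M (C y) i j = false ∧ M (C z) i j = true := by
    rcases Bool.eq_false_or_eq_true (M (C x₁) i j) with h1 | h1
    · exact ⟨x₂, x₁, hmerge.symm, by rw [h1] at hij; simpa using hij.symm, h1⟩
    · exact ⟨x₁, x₂, hmerge, h1, by rw [h1] at hij; simpa using hij.symm⟩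
  -- strict inequality at y
  have hstrict : l1 (M (C y)) < l1 (fiberSup M C Chat (Chat y)) := by
    apply Finset.card_lt_card
    constructor
    · intro ij hij'
      simp only [Finset.mem_filter, Finset.mem_univ, true_and] at *
      exact fiberSup_true M C Chat rfl hij'
    · intro hsub
      have h1 : fiberSup M C Chat (Chat y) i j = true :=
        fiberSup_true M C Chat hyz.symm htrue
      have := hsub (by simp [h1] : (i, j) ∈ _)
      simp only [Finset.mem_filter, Finset.mem_univ, true_and] at this
      rw [hfalse] at this
      exact Bool.false_ne_true this
  refine Finset.sum_lt_sum (fun x _ =>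
      mul_le_mul_of_nonneg_left (by exact_mod_cast l1_fiber_le M C Chat x) (hμ x).le)
    ⟨y, Finset.mem_univ y,
      mul_lt_mul_of_pos_left (by exact_mod_cast hstrict) (hμ y)⟩
end

section
/- Let X be a finite nonempty type (states), U and Û finite types (meta states), C : X → U the ground-truth meta-state mapping, M : U → Matrix (Fin p) (Fin p) Bool an injective assignment of causal skeleton matrices, and μ : X → ℝ strictly positive weights. For a mapping Ĉ : X → Û, let M̂(û) := ⊔_{x : Ĉ x = û} M (C x) and cost(Ĉ) := Σ_{x} μ x · ‖M̂(Ĉ x)‖₁. Then cost(Ĉ) ≥ Σ_{x} μ x · ‖M (C x)‖₁ always, and equality cost(Ĉ) = Σ_{x} μ x · ‖M (C x)‖₁ holds if and only if Ĉ refines C, i.e., for all x₁, x₂ ∈ X, Ĉ x₁ = Ĉ x₂ implies C x₁ = C x₂. -/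
lemma l1_mono {p : ℕ} {A B : Matrix (Fin p) (Fin p) Bool}
    (h : ∀ i j, A i j = true → B i j = true) : l1 A ≤ l1 B := by
  apply Finset.card_le_card
  intro ij hij
  simp only [Finset.mem_filter, Finset.mem_univ, true_and] at *
  exact h _ _ hij

lemma eq_of_l1_eq {p : ℕ} {A B : Matrix (Fin p) (Fin p) Bool}
    (h : ∀ i j, A i j = true → B i j = true) (hl : l1 A = l1 B) : A = B := by
  have hsub : (Finset.univ.filter fun ij : Fin p × Fin p => A ij.1 ij.2 = true) ⊆
      (Finset.univ.filter fun ij : Fin p × Fin p => B ij.1 ij.2 = true) := by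
    intro ij hij
    simp only [Finset.mem_filter, Finset.mem_univ, true_and] at *
    exact h _ _ hij
  have := Finset.eq_of_subset_of_card_le hsub (le_of_eq hl.symm)
  funext i j
  cases hA : A i j with
  | true => exact (h i j hA).symm
  | false =>
    cases hB : B i j with
    | false => rfl
    | true =>
      have : (i, j) ∈ (Finset.univ.filter fun ij : Fin p × Fin p => A ij.1 ij.2 = true) := by
        rw [this]; simp [hB]
      simp only [Finset.mem_filter, Finset.mem_univ, true_and] at this
      rw [hA] at this; exact this

/-- The learned cost always dominates the true cost, with equality precisely when the
learned clustering refines the ground-truth clustering. -/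
theorem cost_ge_and_eq_iff_refines
    {X U Uhat : Type*} [Fintype X] [Nonempty X] [Fintype U] [Fintype Uhat]
    [DecidableEq U] [DecidableEq Uhat] {p : ℕ}
    (C : X → U)
    (M : U → Matrix (Fin p) (Fin p) Bool) (hM : Function.Injective M)
    (μ : X → ℝ) (hμ : ∀ x, 0 < μ x)
    (Chat : X → Uhat) :
    (∑ x, μ x * (l1 (M (C x)) : ℝ)
        ≤ ∑ x, μ x * (l1 (fiberSup M C Chat (Chat x)) : ℝ)) ∧
    ((∑ x, μ x * (l1 (fiberSup M C Chat (Chat x)) : ℝ)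
        = ∑ x, μ x * (l1 (M (C x)) : ℝ)) ↔
      ∀ x₁ x₂, Chat x₁ = Chat x₂ → C x₁ = C x₂) := by
  -- pointwise: M (C x) ≤ fiberSup at (Chat x)
  have hpt : ∀ x : X, ∀ i j, M (C x) i j = true → fiberSup M C Chat (Chat x) i j = true := by
    intro x i j h
    have hx : x ∈ Finset.univ.filter fun y => Chat y = Chat x := by simp
    have := Finset.le_sup (f := fun y => M (C y) i j) hx
    simp only [h] at this
    exact top_le_iff.mp this
  have hterm : ∀ x : X, μ x * (l1 (M (C x)) : ℝ) ≤ μ x * (l1 (fiberSup M C Chat (Chat x)) : ℝ) := by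
    intro x
    exact mul_le_mul_of_nonneg_left (by exact_mod_cast l1_mono (hpt x)) (hμ x).le
  refine ⟨Finset.sum_le_sum fun x _ => hterm x, ?_, ?_⟩
  · -- equality → refines
    intro hsum x₁ x₂ hCh
    have heach := (Finset.sum_eq_sum_iff_of_le fun x _ => hterm x).mp hsum.symm
    have hmat : ∀ x : X, fiberSup M C Chat (Chat x) = M (C x) := by
      intro x
      have := heach x (Finset.mem_univ x)
      have hl : (l1 (M (C x)) : ℝ) = (l1 (fiberSup M C Chat (Chat x)) : ℝ) :=
        mul_left_cancel₀ (hμ x).ne' this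
      exact (eq_of_l1_eq (hpt x) (by exact_mod_cast hl)).symm
    apply hM
    rw [← hmat x₁, ← hmat x₂, hCh]
  · -- refines → equality
    intro href
    have hmat : ∀ x : X, fiberSup M C Chat (Chat x) = M (C x) := by
      intro x
      funext i j
      show (Finset.univ.filter fun y => Chat y = Chat x).sup (fun y => M (C y) i j) = M (C x) i j
      rw [Finset.sup_congr rfl (fun y hy => by
        simp only [Finset.mem_filter, Finset.mem_univ, true_and] at hy
        rw [href y x hy])]
      exact Finset.sup_const ⟨x, by simp⟩ _
    simp_rw [hmat]
end
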